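/- Strong Completeness of the natural deduction system of MD∨: for any set Γ∪{φ} of MD∨-formulas, Γ⊨φ if and only if Γ⊢_{MD∨}φ. -/

import Mathlib

/-!
Soundness is an induction over derivations. It rests on two facts: classical formulas are flat,
their team semantics being Kripke truth at every world of the team, and a dependence atom is
equivalent to its `⊗`-expansion.

For completeness, replace every dependence atom by its expansion. A dependence-free formula is
provably equivalent to the intuitionistic disjunction of its finitely many classical resolutions.
If `Γ ⊬ φ`, extend `Γ` to a set `Δ` that is maximal with `Δ ⊬ φ`; such a set is prime for `∨`.
In the canonical model, whose worlds are the maximal sets not deriving `⊥`, choose for every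
resolution `β` of `φ` a world that extends `Δ` and refutes `β`, and let `X` be the team of these
worlds. Every `γ ∈ Γ` has a resolution in `Δ`, which is true at every world of `X`, so `X ⊨ Γ`.
But `X` satisfies no resolution of `φ`, so `X ⊭ φ`.
-/

/-- Classical formulas of MD∨: α ::= p | ⊥ | ¬α | α∧α | α⊗α | □α | ◇α. -/
inductive CForm : Type where
  | var : ℕ → CForm
  | bot : CForm
  | neg : CForm → CForm
  | and : CForm → CForm → CForm
  | tensor : CForm → CForm → CForm
  | box : CForm → CForm
  | dia : CForm → CForm

/-- Formulas of MD∨ (modal dependence logic with intuitionistic disjunction):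
φ ::= α | =(α₁,…,αₙ,β) | φ∧φ | φ⊗φ | φ∨φ | □φ | ◇φ, with α,αᵢ,β classical.
Classical formulas are embedded structurally; the primitive (classical) negation
is represented by the constructor `cneg`. -/
inductive MDVForm : Type where
  | var : ℕ → MDVForm
  | bot : MDVForm
  | cneg : CForm → MDVForm
  | dep : List CForm → CForm → MDVForm
  | and : MDVForm → MDVForm → MDVForm
  | tensor : MDVForm → MDVForm → MDVForm
  | or : MDVForm → MDVForm → MDVForm
  | box : MDVForm → MDVForm
  | dia : MDVForm → MDVForm

/-- The structural embedding of classical formulas into MD∨ formulas. -/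
def CForm.toMDV : CForm → MDVForm
  | .var p => .var p
  | .bot => .bot
  | .neg α => .cneg α
  | .and α β => .and α.toMDV β.toMDV
  | .tensor α β => .tensor α.toMDV β.toMDV
  | .box α => .box α.toMDV
  | .dia α => .dia α.toMDV

/-- A (classical modal) Kripke model M = (W,R,V) with W nonempty. -/
structure KModel where
  W : Type
  ne : Nonempty W
  R : W → W → Prop
  V : ℕ → Set W

/-- R(X) = {w : ∃ v ∈ X, vRw}. -/
def KModel.img (M : KModel) (X : Set M.W) : Set M.W := {w | ∃ v ∈ X, M.R v w}

/-- Y is a successor team of X: Y ⊆ R(X) and Y ∩ R(w) ≠ ∅ for every w ∈ X. -/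
def KModel.succT (M : KModel) (X Y : Set M.W) : Prop :=
  Y ⊆ M.img X ∧ ∀ w ∈ X, ∃ u ∈ Y, M.R w u

/-- Team semantics for classical formulas. -/
def KModel.csat (M : KModel) : Set M.W → CForm → Prop
  | X, .var p => X ⊆ M.V p
  | X, .bot => X = ∅
  | X, .neg α => ∀ w ∈ X, ¬ M.csat {w} α
  | X, .and α β => M.csat X α ∧ M.csat X β
  | X, .tensor α β => ∃ Y Z, X = Y ∪ Z ∧ M.csat Y α ∧ M.csat Z β
  | X, .box α => M.csat (M.img X) α
  | X, .dia α => ∃ Y, M.succT X Y ∧ M.csat Y α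

/-- Team semantics for MD∨ formulas. -/
def KModel.sat (M : KModel) : Set M.W → MDVForm → Prop
  | X, .var p => X ⊆ M.V p
  | X, .bot => X = ∅
  | X, .cneg α => ∀ w ∈ X, ¬ M.csat {w} α
  | X, .dep αs β => ∀ w ∈ X, ∀ u ∈ X,
      (∀ α ∈ αs, (M.csat {w} α ↔ M.csat {u} α)) → (M.csat {w} β ↔ M.csat {u} β)
  | X, .and φ ψ => M.sat X φ ∧ M.sat X ψ
  | X, .tensor φ ψ => ∃ Y Z, X = Y ∪ Z ∧ M.sat Y φ ∧ M.sat Z ψ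
  | X, .or φ ψ => M.sat X φ ∨ M.sat X ψ
  | X, .box φ => M.sat (M.img X) φ
  | X, .dia φ => ∃ Y, M.succT X Y ∧ M.sat Y φ

/-- Γ⊨φ : semantic entailment from a set of premises. -/
def SetEntails (Γ : Set MDVForm) (φ : MDVForm) : Prop :=
  ∀ (M : KModel) (X : Set M.W), (∀ γ ∈ Γ, M.sat X γ) → M.sat X φ

/-- φ⊨ψ : semantic entailment. -/
def MDVEntails (φ ψ : MDVForm) : Prop :=
  ∀ (M : KModel) (X : Set M.W), M.sat X φ → M.sat X ψ

/-- Conjunction of a list of formulas (used only for nonempty lists). -/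
def bigAnd : List MDVForm → MDVForm
  | [] => .bot
  | [φ] => φ
  | φ :: ψ :: χs => .and φ (bigAnd (ψ :: χs))

/-- Tensor of a list of formulas (used only for nonempty lists). -/
def bigTensor : List MDVForm → MDVForm
  | [] => .bot
  | [φ] => φ
  | φ :: ψ :: χs => .tensor φ (bigTensor (ψ :: χs))

/-- α^1 := α and α^0 := ¬α. -/
def signed (b : Bool) (α : CForm) : MDVForm := if b then α.toMDV else .cneg α

/-- All Boolean vectors of length n (representing the functions v ∈ 2^{1,…,n}). -/
def allVecs : ℕ → List (List Bool)
  | 0 => [[]]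
  | n + 1 => ((allVecs n).map (List.cons true)) ++ ((allVecs n).map (List.cons false))

/-- The conjunct α₁^{v(1)} ∧ ⋯ ∧ αₖ^{v(k)} ∧ (β ∨ ¬β) for a sign vector v. -/
def depRow (αs : List CForm) (β : CForm) (v : List Bool) : MDVForm :=
  bigAnd (List.zipWith signed v αs ++ [MDVForm.or β.toMDV (.cneg β)])

/-- ⊗_{v ∈ 2^{1,…,k}} (α₁^{v(1)} ∧ ⋯ ∧ αₖ^{v(k)} ∧ (β ∨ ¬β)). -/
def depTensor (αs : List CForm) (β : CForm) : MDVForm :=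
  bigTensor ((allVecs αs.length).map (depRow αs β))

/-- The natural deduction system of MD∨ : Γ ⊢ φ. -/
inductive ND : Set MDVForm → MDVForm → Prop where
  | hyp {Γ : Set MDVForm} {φ : MDVForm} : φ ∈ Γ → ND Γ φ
  | andI {Γ : Set MDVForm} {φ ψ : MDVForm} : ND Γ φ → ND Γ ψ → ND Γ (φ.and ψ)
  | andE1 {Γ : Set MDVForm} {φ ψ : MDVForm} : ND Γ (φ.and ψ) → ND Γ φ
  | andE2 {Γ : Set MDVForm} {φ ψ : MDVForm} : ND Γ (φ.and ψ) → ND Γ ψ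
  | dne {Γ : Set MDVForm} (α : CForm) : ND Γ (.cneg (.neg α)) → ND Γ α.toMDV
  | exfalso {Γ : Set MDVForm} {φ : MDVForm} : ND Γ .bot → ND Γ φ
  | boxMon {Γ : Set MDVForm} {ψ : MDVForm} (l : List MDVForm) :
      (∀ χ ∈ l, ND Γ (.box χ)) → ND {χ | χ ∈ l} ψ → ND Γ (.box ψ)
  | interBoxDia {Γ : Set MDVForm} (α : CForm) :
      ND Γ (.cneg (.box α)) → ND Γ (.dia (.cneg α))
  | orI1 {Γ : Set MDVForm} {φ ψ : MDVForm} : ND Γ φ → ND Γ (φ.or ψ)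
  | orI2 {Γ : Set MDVForm} {φ ψ : MDVForm} : ND Γ ψ → ND Γ (φ.or ψ)
  | orE {Γ : Set MDVForm} {φ ψ χ : MDVForm} :
      ND Γ (φ.or ψ) → ND (insert φ Γ) χ → ND (insert ψ Γ) χ → ND Γ χ
  | distrTensorOr {Γ : Set MDVForm} {φ ψ χ : MDVForm} :
      ND Γ (φ.tensor (ψ.or χ)) → ND Γ ((φ.tensor ψ).or (φ.tensor χ))
  | distrDiaOr {Γ : Set MDVForm} {φ ψ : MDVForm} :
      ND Γ (.dia (φ.or ψ)) → ND Γ ((MDVForm.dia φ).or (.dia ψ))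
  | distrBoxOr {Γ : Set MDVForm} {φ ψ : MDVForm} :
      ND Γ (.box (φ.or ψ)) → ND Γ ((MDVForm.box φ).or (.box ψ))
  | tensorI {Γ : Set MDVForm} {φ : MDVForm} (ψ : MDVForm) : ND Γ φ → ND Γ (φ.tensor ψ)
  | tensorE {Γ : Set MDVForm} {φ ψ : MDVForm} (α : CForm) : ND Γ (φ.tensor ψ) →
      ND (insert φ Γ) α.toMDV → ND (insert ψ Γ) α.toMDV → ND Γ α.toMDV
  | tensorSub {Γ : Set MDVForm} {φ ψ χ : MDVForm} :
      ND Γ (φ.tensor ψ) → ND (insert ψ Γ) χ → ND Γ (φ.tensor χ)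
  | tensorComm {Γ : Set MDVForm} {φ ψ : MDVForm} : ND Γ (φ.tensor ψ) → ND Γ (ψ.tensor φ)
  | tensorAssoc {Γ : Set MDVForm} {φ ψ χ : MDVForm} :
      ND Γ (φ.tensor (ψ.tensor χ)) → ND Γ ((φ.tensor ψ).tensor χ)
  | depI {Γ : Set MDVForm} (αs : List CForm) (β : CForm) :
      ND Γ (depTensor αs β) → ND Γ (.dep αs β)
  | depE {Γ : Set MDVForm} (αs : List CForm) (β : CForm) :
      ND Γ (.dep αs β) → ND Γ (depTensor αs β)
  | negI {Γ : Set MDVForm} (α : CForm) : ND (insert α.toMDV Γ) .bot → ND Γ (.cneg α)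
  | negE {Γ : Set MDVForm} (α : CForm) : ND Γ α.toMDV → ND Γ (.cneg α) → ND Γ .bot
  | diaMon {Γ : Set MDVForm} {φ ψ : MDVForm} : ND Γ (.dia φ) → ND {φ} ψ → ND Γ (.dia ψ)
  | interDiaBox {Γ : Set MDVForm} (α : CForm) :
      ND Γ (.dia (.cneg α)) → ND Γ (.cneg (.box α))

/-! ## Team semantics -/

theorem Set.exists_union_eq_iff_forall_or {α : Type*} {X : Set α} {P Q : α → Prop} :
    (∃ Y Z, X = Y ∪ Z ∧ (∀ w ∈ Y, P w) ∧ ∀ w ∈ Z, Q w) ↔ ∀ w ∈ X, P w ∨ Q w := by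
  constructor
  · rintro ⟨Y, Z, rfl, hY, hZ⟩ w (hw | hw)
    exacts [Or.inl (hY w hw), Or.inr (hZ w hw)]
  · intro h
    refine ⟨{w ∈ X | P w}, {w ∈ X | Q w}, ?_, fun w hw => hw.2, fun w hw => hw.2⟩
    ext w
    simp only [Set.mem_union, Set.mem_sep_iff]
    exact ⟨fun hw => (h w hw).imp (⟨hw, ·⟩) (⟨hw, ·⟩), by rintro (hw | hw) <;> exact hw.1⟩

theorem mem_allVecs_iff {n : ℕ} {v : List Bool} : v ∈ allVecs n ↔ v.length = n := by
  induction n generalizing v with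
  | zero => simp [allVecs]
  | succ n ih =>
    rcases v with _ | ⟨b, v⟩
    · simp [allVecs]
    · cases b <;> simp [allVecs, ih]

theorem nodup_allVecs (n : ℕ) : (allVecs n).Nodup := by
  induction n with
  | zero => simp [allVecs]
  | succ n ih =>
    refine List.Nodup.append (ih.map List.cons_injective) (ih.map List.cons_injective) ?_
    simp [List.disjoint_left]

def bigOr : List MDVForm → MDVForm
  | [] => .bot
  | [φ] => φ
  | φ :: ψ :: χs => .or φ (bigOr (ψ :: χs))

namespace KModel

variable {M : KModel}

def holds (M : KModel) (w : M.W) : CForm → Prop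
  | .var p => w ∈ M.V p
  | .bot => False
  | .neg α => ¬ M.holds w α
  | .and α β => M.holds w α ∧ M.holds w β
  | .tensor α β => M.holds w α ∨ M.holds w β
  | .box α => ∀ u, M.R w u → M.holds u α
  | .dia α => ∃ u, M.R w u ∧ M.holds u α

theorem forall_mem_img_iff {X : Set M.W} {P : M.W → Prop} :
    (∀ u ∈ M.img X, P u) ↔ ∀ w ∈ X, ∀ u, M.R w u → P u :=
  ⟨fun h w hw u hR => h u ⟨w, hw, hR⟩, fun h _ ⟨w, hw, hR⟩ => h w hw _ hR⟩

theorem exists_succT_iff {X : Set M.W} {P : M.W → Prop} :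
    (∃ Y, M.succT X Y ∧ ∀ u ∈ Y, P u) ↔ ∀ w ∈ X, ∃ u, M.R w u ∧ P u := by
  constructor
  · rintro ⟨Y, ⟨-, hY⟩, hP⟩ w hw
    obtain ⟨u, hu, hR⟩ := hY w hw
    exact ⟨u, hR, hP u hu⟩
  · intro h
    refine ⟨{u ∈ M.img X | P u}, ⟨fun u hu => hu.1, fun w hw => ?_⟩, fun u hu => hu.2⟩
    obtain ⟨u, hR, hu⟩ := h w hw
    exact ⟨u, ⟨⟨w, hw, hR⟩, hu⟩, hR⟩

theorem img_mono {X Y : Set M.W} (h : X ⊆ Y) : M.img X ⊆ M.img Y :=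
  fun _ ⟨w, hw, hR⟩ => ⟨w, h hw, hR⟩

theorem csat_iff_forall_holds {X : Set M.W} {α : CForm} :
    M.csat X α ↔ ∀ w ∈ X, M.holds w α := by
  induction α generalizing X with
  | var p => rfl
  | bot => exact Set.eq_empty_iff_forall_notMem
  | neg α ih => simp only [csat, holds, ih, Set.mem_singleton_iff, forall_eq]
  | and α β ihα ihβ => simp only [csat, holds, ihα, ihβ, ← forall_and]
  | tensor α β ihα ihβ => simp only [csat, holds, ihα, ihβ]; exact Set.exists_union_eq_iff_forall_or
  | box α ih => simp only [csat, holds, ih]; exact forall_mem_img_iff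
  | dia α ih => simp only [csat, holds, ih]; exact exists_succT_iff

theorem csat_singleton_iff {w : M.W} {α : CForm} : M.csat {w} α ↔ M.holds w α := by
  simp [csat_iff_forall_holds]

theorem sat_toMDV_iff {X : Set M.W} {α : CForm} :
    M.sat X α.toMDV ↔ ∀ w ∈ X, M.holds w α := by
  rw [← csat_iff_forall_holds]
  induction α generalizing X <;> simp only [CForm.toMDV, sat, csat, *]

theorem sat_cneg_iff {X : Set M.W} {α : CForm} :
    M.sat X (.cneg α) ↔ ∀ w ∈ X, ¬ M.holds w α := by
  simp only [sat, csat_singleton_iff]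

theorem sat_cneg_neg_iff {X : Set M.W} {α : CForm} :
    M.sat X (.cneg (.neg α)) ↔ M.sat X α.toMDV := by
  simp only [sat_cneg_iff, holds, not_not, sat_toMDV_iff]

theorem sat_dia_cneg_iff {X : Set M.W} {α : CForm} :
    M.sat X (.dia (.cneg α)) ↔ M.sat X (.cneg (.box α)) := by
  simp only [sat, csat_singleton_iff, holds, exists_succT_iff, not_forall, exists_prop]

theorem sat_toMDV_union {Y Z : Set M.W} {α : CForm} (hY : M.sat Y α.toMDV)
    (hZ : M.sat Z α.toMDV) : M.sat (Y ∪ Z) α.toMDV := by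
  rw [sat_toMDV_iff] at *
  rintro w (hw | hw)
  exacts [hY w hw, hZ w hw]

theorem sat_empty (φ : MDVForm) : M.sat ∅ φ := by
  induction φ with
  | tensor φ ψ ihφ ihψ => exact ⟨∅, ∅, (Set.union_empty _).symm, ihφ, ihψ⟩
  | or φ ψ ihφ _ => exact Or.inl ihφ
  | box φ ih => simpa [sat, img] using ih
  | dia φ ih => exact ⟨∅, ⟨Set.empty_subset _, by simp⟩, ih⟩
  | _ => simp_all [sat]

theorem sat_mono {X Y : Set M.W} {φ : MDVForm} (hYX : Y ⊆ X) (hX : M.sat X φ) : M.sat Y φ := by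
  induction φ generalizing X Y with
  | var p => exact hYX.trans hX
  | bot => exact Set.subset_eq_empty hYX hX
  | cneg α => exact fun w hw => hX w (hYX hw)
  | dep αs β => exact fun w hw u hu => hX w (hYX hw) u (hYX hu)
  | and φ ψ ihφ ihψ => exact ⟨ihφ hYX hX.1, ihψ hYX hX.2⟩
  | tensor φ ψ ihφ ihψ =>
    obtain ⟨Z₁, Z₂, rfl, h₁, h₂⟩ := hX
    refine ⟨Y ∩ Z₁, Y ∩ Z₂, ?_, ihφ Set.inter_subset_right h₁, ihψ Set.inter_subset_right h₂⟩
    rw [← Set.inter_union_distrib_left, Set.inter_eq_left.2 hYX]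
  | or φ ψ ihφ ihψ => exact hX.imp (ihφ hYX) (ihψ hYX)
  | box φ ih => exact ih (img_mono hYX) hX
  | dia φ ih =>
    obtain ⟨Z, ⟨-, hZ⟩, hφ⟩ := hX
    refine ⟨{u ∈ Z | ∃ w ∈ Y, M.R w u}, ⟨?_, fun w hw => ?_⟩, ih (fun u hu => hu.1) hφ⟩
    · rintro u ⟨-, w, hw, hR⟩
      exact ⟨w, hw, hR⟩
    obtain ⟨u, hu, hR⟩ := hZ w (hYX hw)
    exact ⟨u, ⟨hu, w, hw, hR⟩, hR⟩

theorem forall_sat_insert {Γ : Set MDVForm} {φ : MDVForm} {X Y : Set M.W} (hYX : Y ⊆ X)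
    (hφ : M.sat Y φ) (hΓ : ∀ γ ∈ Γ, M.sat X γ) : ∀ γ ∈ insert φ Γ, M.sat Y γ := by
  rintro γ (rfl | hγ)
  exacts [hφ, sat_mono hYX (hΓ γ hγ)]

theorem sat_bigAnd_cons {X : Set M.W} {φ : MDVForm} {l : List MDVForm} :
    M.sat X (bigAnd (φ :: l)) ↔ M.sat X φ ∧ ∀ ψ ∈ l, M.sat X ψ := by
  induction l generalizing φ with
  | nil => simp [bigAnd]
  | cons ψ l ih => simp only [bigAnd, sat, ih, List.forall_mem_cons]

theorem sat_bigAnd {X : Set M.W} {l : List MDVForm} (hl : l ≠ []) :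
    M.sat X (bigAnd l) ↔ ∀ ψ ∈ l, M.sat X ψ := by
  obtain ⟨φ, l, rfl⟩ := List.exists_cons_of_ne_nil hl
  rw [sat_bigAnd_cons, List.forall_mem_cons]

theorem sat_bigTensor_cons {X : Set M.W} {φ : MDVForm} {l : List MDVForm} :
    M.sat X (bigTensor (φ :: l)) ↔ ∃ Y Z, X = Y ∪ Z ∧ M.sat Y φ ∧ M.sat Z (bigTensor l) := by
  cases l with
  | nil =>
    refine ⟨fun h => ⟨X, ∅, (Set.union_empty X).symm, h, rfl⟩, ?_⟩
    rintro ⟨Y, Z, rfl, hY, rfl : Z = ∅⟩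
    simpa [bigTensor] using hY
  | cons ψ l => rfl

theorem sat_bigTensor_map_iff {ι : Type*} {X : Set M.W} {l : List ι} (hl : l.Nodup)
    (F : ι → MDVForm) :
    M.sat X (bigTensor (l.map F)) ↔
      ∃ Y : ι → Set M.W, X = ⋃ i ∈ l, Y i ∧ ∀ i ∈ l, M.sat (Y i) (F i) := by
  classical
  induction l generalizing X with
  | nil => simp [bigTensor, sat]
  | cons i l ih =>
    obtain ⟨hi, hl⟩ := List.nodup_cons.1 hl
    have hU (Y : ι → Set M.W) : ⋃ j ∈ i :: l, Y j = Y i ∪ ⋃ j ∈ l, Y j := by simp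
    simp only [List.map_cons, sat_bigTensor_cons, ih hl, List.forall_mem_cons, hU]
    constructor
    · rintro ⟨A, _, rfl, hA, Y, rfl, hY⟩
      refine ⟨Function.update Y i A, ?_, by simpa using hA, fun j hj => ?_⟩
      · congr 1
        · simp
        · refine Set.iUnion₂_congr fun j hj => ?_
          rw [Function.update_of_ne (ne_of_mem_of_not_mem hj hi)]
      · rw [Function.update_of_ne (ne_of_mem_of_not_mem hj hi)]
        exact hY j hj
    · rintro ⟨Y, rfl, hYi, hY⟩
      exact ⟨Y i, _, rfl, hYi, Y, rfl, hY⟩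

open Classical in
/-- The sign vector `v` of the row `depRow αs β v` of `depTensor αs β` to which `w` belongs. -/
noncomputable def pattern (M : KModel) (w : M.W) (αs : List CForm) : List Bool :=
  αs.map fun α => decide (M.holds w α)

theorem pattern_eq_pattern_iff {w u : M.W} {αs : List CForm} :
    M.pattern w αs = M.pattern u αs ↔ ∀ α ∈ αs, (M.holds w α ↔ M.holds u α) := by
  simp only [pattern, List.map_inj_left, decide_eq_decide]

open Classical in
theorem sat_signed_iff {X : Set M.W} {b : Bool} {α : CForm} :
    M.sat X (signed b α) ↔ ∀ w ∈ X, decide (M.holds w α) = b := by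
  cases b <;> simp [signed, sat_toMDV_iff, sat_cneg_iff]

theorem forall_sat_zipWith_signed_iff {X : Set M.W} {αs : List CForm} {v : List Bool}
    (hv : v.length = αs.length) :
    (∀ ψ ∈ List.zipWith signed v αs, M.sat X ψ) ↔ ∀ w ∈ X, M.pattern w αs = v := by
  induction v generalizing αs with
  | nil => simp [List.eq_nil_of_length_eq_zero hv.symm, pattern]
  | cons b v ih =>
    obtain ⟨α, αs, rfl⟩ := List.exists_cons_of_length_eq_add_one hv.symm
    simp only [List.zipWith_cons_cons, List.forall_mem_cons, sat_signed_iff,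
      ih (Nat.succ_injective hv), pattern, List.map_cons, List.cons.injEq, forall_and]

theorem sat_bigOr {X : Set M.W} {l : List MDVForm} (hl : l ≠ []) :
    M.sat X (bigOr l) ↔ ∃ ψ ∈ l, M.sat X ψ := by
  induction l with
  | nil => exact absurd rfl hl
  | cons φ l ih =>
    rcases l with _ | ⟨ψ, l⟩
    · simp [bigOr]
    · simp only [bigOr] at ih ⊢
      simp [sat, ih]

theorem sat_depRow_iff {X : Set M.W} {αs : List CForm} {β : CForm} {v : List Bool}
    (hv : v.length = αs.length) :
    M.sat X (depRow αs β v) ↔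
      (∀ w ∈ X, M.pattern w αs = v) ∧ ((∀ w ∈ X, M.holds w β) ∨ ∀ w ∈ X, ¬ M.holds w β) := by
  rw [depRow, sat_bigAnd (by simp), List.forall_mem_append, forall_sat_zipWith_signed_iff hv,
    List.forall_mem_singleton, sat, sat_toMDV_iff, sat_cneg_iff]

theorem sat_depTensor_iff {X : Set M.W} {αs : List CForm} {β : CForm} :
    M.sat X (depTensor αs β) ↔ M.sat X (.dep αs β) := by
  have hlen {v : List Bool} (hv : v ∈ allVecs αs.length) := mem_allVecs_iff.1 hv
  simp only [depTensor, sat_bigTensor_map_iff (nodup_allVecs _), sat, csat_singleton_iff]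
  constructor
  · rintro ⟨Y, rfl, hY⟩ w hw u hu hwu
    simp only [Set.mem_iUnion] at hw hu
    obtain ⟨v, hv, hwv⟩ := hw
    obtain ⟨v', hv', huv'⟩ := hu
    obtain ⟨hpat, hβ⟩ := (sat_depRow_iff (hlen hv)).1 (hY v hv)
    obtain rfl : v = v' := by
      rw [← hpat w hwv, ← ((sat_depRow_iff (hlen hv')).1 (hY v' hv')).1 u huv']
      exact pattern_eq_pattern_iff.2 hwu
    rcases hβ with hβ | hβ
    · exact iff_of_true (hβ w hwv) (hβ u huv')
    · exact iff_of_false (hβ w hwv) (hβ u huv')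
  · intro hdep
    refine ⟨fun v => {w ∈ X | M.pattern w αs = v}, ?_, fun v hv => ?_⟩
    · ext w
      simp only [Set.mem_iUnion, Set.mem_sep_iff, exists_prop]
      exact ⟨fun hw => ⟨_, mem_allVecs_iff.2 (by simp [pattern]), hw, rfl⟩,
        fun ⟨_, _, hw, _⟩ => hw⟩
    rw [sat_depRow_iff (hlen hv)]
    refine ⟨fun w hw => hw.2, ?_⟩
    by_cases h : ∃ w ∈ {w ∈ X | M.pattern w αs = v}, M.holds w β
    · obtain ⟨w, hw, hβ⟩ := h
      refine Or.inl fun u hu => (hdep w hw.1 u hu.1 ?_).1 hβ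
      exact pattern_eq_pattern_iff.1 (hw.2.trans hu.2.symm)
    · exact Or.inr fun u hu hβ => h ⟨u, hu, hβ⟩

end KModel

open KModel in
theorem ND.sound {Γ : Set MDVForm} {φ : MDVForm} (h : ND Γ φ) : SetEntails Γ φ := by
  induction h with
  | hyp h => exact fun M X hX => hX _ h
  | andI _ _ ih₁ ih₂ => exact fun M X hX => ⟨ih₁ M X hX, ih₂ M X hX⟩
  | andE1 _ ih => exact fun M X hX => (ih M X hX).1
  | andE2 _ ih => exact fun M X hX => (ih M X hX).2
  | dne α _ ih => exact fun M X hX => sat_cneg_neg_iff.1 (ih M X hX)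
  | exfalso _ ih =>
    intro M X hX
    rw [show X = ∅ from ih M X hX]
    exact sat_empty _
  | boxMon l _ _ ih₁ ih₂ => exact fun M X hX => ih₂ M (M.img X) fun χ hχ => ih₁ χ hχ M X hX
  | interBoxDia α _ ih => exact fun M X hX => sat_dia_cneg_iff.2 (ih M X hX)
  | orI1 _ ih => exact fun M X hX => Or.inl (ih M X hX)
  | orI2 _ ih => exact fun M X hX => Or.inr (ih M X hX)
  | orE _ _ _ ih ih₁ ih₂ =>
    intro M X hX
    rcases ih M X hX with h | h
    exacts [ih₁ M X (forall_sat_insert subset_rfl h hX),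
      ih₂ M X (forall_sat_insert subset_rfl h hX)]
  | distrTensorOr _ ih =>
    intro M X hX
    obtain ⟨Y, Z, hYZ, hY, hZ | hZ⟩ := ih M X hX
    exacts [Or.inl ⟨Y, Z, hYZ, hY, hZ⟩, Or.inr ⟨Y, Z, hYZ, hY, hZ⟩]
  | distrDiaOr _ ih =>
    intro M X hX
    obtain ⟨Y, hXY, hY | hY⟩ := ih M X hX
    exacts [Or.inl ⟨Y, hXY, hY⟩, Or.inr ⟨Y, hXY, hY⟩]
  | distrBoxOr _ ih => exact ih
  | tensorI ψ _ ih =>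
    exact fun M X hX => ⟨X, ∅, (Set.union_empty X).symm, ih M X hX, sat_empty ψ⟩
  | tensorE α _ _ _ ih ih₁ ih₂ =>
    intro M X hX
    obtain ⟨Y, Z, rfl, hY, hZ⟩ := ih M X hX
    exact sat_toMDV_union (ih₁ M Y (forall_sat_insert Set.subset_union_left hY hX))
      (ih₂ M Z (forall_sat_insert Set.subset_union_right hZ hX))
  | tensorSub _ _ ih ih₁ =>
    intro M X hX
    obtain ⟨Y, Z, rfl, hY, hZ⟩ := ih M X hX
    exact ⟨Y, Z, rfl, hY, ih₁ M Z (forall_sat_insert Set.subset_union_right hZ hX)⟩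
  | tensorComm _ ih =>
    intro M X hX
    obtain ⟨Y, Z, rfl, hY, hZ⟩ := ih M X hX
    exact ⟨Z, Y, Set.union_comm Y Z, hZ, hY⟩
  | tensorAssoc _ ih =>
    intro M X hX
    obtain ⟨Y, _, rfl, hY, Z, V, rfl, hZ, hV⟩ := ih M X hX
    exact ⟨Y ∪ Z, V, (Set.union_assoc Y Z V).symm, ⟨Y, Z, rfl, hY, hZ⟩, hV⟩
  | depI αs β _ ih => exact fun M X hX => sat_depTensor_iff.1 (ih M X hX)
  | depE αs β _ ih => exact fun M X hX => sat_depTensor_iff.2 (ih M X hX)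
  | negI α _ ih =>
    intro M X hX
    refine sat_cneg_iff.2 fun w hw hα => Set.singleton_ne_empty w (ih M {w} ?_)
    exact forall_sat_insert (Set.singleton_subset_iff.2 hw) (sat_toMDV_iff.2 (by simpa)) hX
  | negE α _ _ ih₁ ih₂ =>
    intro M X hX
    have h₁ := sat_toMDV_iff.1 (ih₁ M X hX)
    have h₂ := sat_cneg_iff.1 (ih₂ M X hX)
    exact Set.eq_empty_of_forall_notMem fun w hw => h₂ w hw (h₁ w hw)
  | diaMon _ _ ih₁ ih₂ =>
    intro M X hX
    obtain ⟨Y, hXY, hY⟩ := ih₁ M X hX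
    exact ⟨Y, hXY, ih₂ M Y (by simpa using hY)⟩
  | interDiaBox α _ ih => exact fun M X hX => sat_dia_cneg_iff.1 (ih M X hX)

/-! ## Derivations -/

namespace ND

variable {Γ Δ : Set MDVForm} {φ φ' ψ ψ' χ : MDVForm} {l : List MDVForm} {α : CForm}

theorem weaken (h : ND Γ φ) (hΓΔ : Γ ⊆ Δ) : ND Δ φ := by
  induction h generalizing Δ with
  | hyp h => exact hyp (hΓΔ h)
  | andI _ _ ih₁ ih₂ => exact andI (ih₁ hΓΔ) (ih₂ hΓΔ)
  | andE1 _ ih => exact andE1 (ih hΓΔ)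
  | andE2 _ ih => exact andE2 (ih hΓΔ)
  | dne α _ ih => exact dne α (ih hΓΔ)
  | exfalso _ ih => exact exfalso (ih hΓΔ)
  | boxMon l _ h ih => exact boxMon l (fun χ hχ => ih χ hχ hΓΔ) h
  | interBoxDia α _ ih => exact interBoxDia α (ih hΓΔ)
  | orI1 _ ih => exact orI1 (ih hΓΔ)
  | orI2 _ ih => exact orI2 (ih hΓΔ)
  | orE _ _ _ ih ih₁ ih₂ =>
    exact orE (ih hΓΔ) (ih₁ (Set.insert_subset_insert hΓΔ)) (ih₂ (Set.insert_subset_insert hΓΔ))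
  | distrTensorOr _ ih => exact distrTensorOr (ih hΓΔ)
  | distrDiaOr _ ih => exact distrDiaOr (ih hΓΔ)
  | distrBoxOr _ ih => exact distrBoxOr (ih hΓΔ)
  | tensorI ψ _ ih => exact tensorI ψ (ih hΓΔ)
  | tensorE α _ _ _ ih ih₁ ih₂ =>
    exact tensorE α (ih hΓΔ) (ih₁ (Set.insert_subset_insert hΓΔ))
      (ih₂ (Set.insert_subset_insert hΓΔ))
  | tensorSub _ _ ih ih₁ => exact tensorSub (ih hΓΔ) (ih₁ (Set.insert_subset_insert hΓΔ))
  | tensorComm _ ih => exact tensorComm (ih hΓΔ)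
  | tensorAssoc _ ih => exact tensorAssoc (ih hΓΔ)
  | depI αs β _ ih => exact depI αs β (ih hΓΔ)
  | depE αs β _ ih => exact depE αs β (ih hΓΔ)
  | negI α _ ih => exact negI α (ih (Set.insert_subset_insert hΓΔ))
  | negE α _ _ ih₁ ih₂ => exact negE α (ih₁ hΓΔ) (ih₂ hΓΔ)
  | diaMon _ h ih => exact diaMon (ih hΓΔ) h
  | interDiaBox α _ ih => exact interDiaBox α (ih hΓΔ)

theorem monotone_premises : Monotone (ND · φ) := fun _ _ h hd => weaken hd h

theorem monotone_insert_premises : Monotone fun Γ => ND (insert ψ Γ) φ :=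
  fun _ _ h hd => weaken hd (Set.insert_subset_insert h)

theorem cut (h₁ : ND Γ φ) (h₂ : ND (insert φ Γ) ψ) : ND Γ ψ :=
  orE (orI1 (ψ := φ) h₁) h₂ h₂

theorem comp (h₁ : ND Γ φ) (h₂ : ND {φ} ψ) : ND Γ ψ :=
  cut h₁ (weaken h₂ (Set.singleton_subset_iff.2 (Set.mem_insert φ Γ)))

theorem exists_finite_and {P Q : Set MDVForm → Prop} (hP : Monotone P) (hQ : Monotone Q)
    (h₁ : ∃ Δ ⊆ Γ, Δ.Finite ∧ P Δ) (h₂ : ∃ Δ ⊆ Γ, Δ.Finite ∧ Q Δ) :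
    ∃ Δ ⊆ Γ, Δ.Finite ∧ P Δ ∧ Q Δ := by
  obtain ⟨Δ₁, hΔ₁, hfin₁, hP₁⟩ := h₁
  obtain ⟨Δ₂, hΔ₂, hfin₂, hQ₂⟩ := h₂
  exact ⟨Δ₁ ∪ Δ₂, Set.union_subset hΔ₁ hΔ₂, hfin₁.union hfin₂,
    hP Set.subset_union_left hP₁, hQ Set.subset_union_right hQ₂⟩

theorem exists_finite_forall_mem {ι : Type*} {P : ι → Set MDVForm → Prop}
    (hP : ∀ i, Monotone (P i)) {l : List ι} (h : ∀ i ∈ l, ∃ Δ ⊆ Γ, Δ.Finite ∧ P i Δ) :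
    ∃ Δ ⊆ Γ, Δ.Finite ∧ ∀ i ∈ l, P i Δ := by
  induction l with
  | nil => exact ⟨∅, Set.empty_subset Γ, Set.finite_empty, by simp⟩
  | cons i l ih =>
    simp only [List.forall_mem_cons] at h ⊢
    exact exists_finite_and (hP i) (fun _ _ hs hl j hj => hP j hs (hl j hj)) h.1 (ih h.2)

theorem exists_finite_insert (h : ∃ Δ ⊆ insert ψ Γ, Δ.Finite ∧ ND Δ φ) :
    ∃ Δ ⊆ Γ, Δ.Finite ∧ ND (insert ψ Δ) φ := by
  obtain ⟨Δ, hΔ, hfin, hd⟩ := h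
  exact ⟨Δ \ {ψ}, Set.sdiff_singleton_subset_iff.2 hΔ, hfin.sdiff,
    weaken hd (Set.sdiff_singleton_subset_iff.1 subset_rfl)⟩

theorem exists_finite_map {P : Set MDVForm → Prop} (hr : ∀ {Δ}, P Δ → ND Δ φ)
    (h : ∃ Δ ⊆ Γ, Δ.Finite ∧ P Δ) : ∃ Δ ⊆ Γ, Δ.Finite ∧ ND Δ φ :=
  h.imp fun _ => .imp_right (.imp_right hr)

theorem exists_finite_subset (h : ND Γ φ) : ∃ Δ ⊆ Γ, Δ.Finite ∧ ND Δ φ := by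
  induction h with
  | @hyp Γ φ h =>
    exact ⟨{φ}, Set.singleton_subset_iff.2 h, Set.finite_singleton φ, hyp rfl⟩
  | andI _ _ ih₁ ih₂ =>
    exact exists_finite_map (fun h => andI h.1 h.2)
      (exists_finite_and monotone_premises monotone_premises ih₁ ih₂)
  | andE1 _ ih => exact exists_finite_map andE1 ih
  | andE2 _ ih => exact exists_finite_map andE2 ih
  | dne α _ ih => exact exists_finite_map (dne α) ih
  | exfalso _ ih => exact exists_finite_map exfalso ih
  | boxMon l _ h ih =>
    exact exists_finite_map (boxMon l · h)
      (exists_finite_forall_mem (fun _ => monotone_premises) ih)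
  | interBoxDia α _ ih => exact exists_finite_map (interBoxDia α) ih
  | orI1 _ ih => exact exists_finite_map orI1 ih
  | orI2 _ ih => exact exists_finite_map orI2 ih
  | orE _ _ _ ih ih₁ ih₂ =>
    exact exists_finite_map (fun h => orE h.1 h.2.1 h.2.2)
      (exists_finite_and monotone_premises
        (monotone_insert_premises.inf monotone_insert_premises) ih
        (exists_finite_and monotone_insert_premises monotone_insert_premises
          (exists_finite_insert ih₁) (exists_finite_insert ih₂)))
  | distrTensorOr _ ih => exact exists_finite_map distrTensorOr ih
  | distrDiaOr _ ih => exact exists_finite_map distrDiaOr ih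
  | distrBoxOr _ ih => exact exists_finite_map distrBoxOr ih
  | tensorI ψ _ ih => exact exists_finite_map (tensorI ψ) ih
  | tensorE α _ _ _ ih ih₁ ih₂ =>
    exact exists_finite_map (fun h => tensorE α h.1 h.2.1 h.2.2)
      (exists_finite_and monotone_premises
        (monotone_insert_premises.inf monotone_insert_premises) ih
        (exists_finite_and monotone_insert_premises monotone_insert_premises
          (exists_finite_insert ih₁) (exists_finite_insert ih₂)))
  | tensorSub _ _ ih ih₁ =>
    exact exists_finite_map (fun h => tensorSub h.1 h.2)
      (exists_finite_and monotone_premises monotone_insert_premises ih (exists_finite_insert ih₁))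
  | tensorComm _ ih => exact exists_finite_map tensorComm ih
  | tensorAssoc _ ih => exact exists_finite_map tensorAssoc ih
  | depI αs β _ ih => exact exists_finite_map (depI αs β) ih
  | depE αs β _ ih => exact exists_finite_map (depE αs β) ih
  | negI α _ ih => exact exists_finite_map (negI α) (exists_finite_insert ih)
  | negE α _ _ ih₁ ih₂ =>
    exact exists_finite_map (fun h => negE α h.1 h.2)
      (exists_finite_and monotone_premises monotone_premises ih₁ ih₂)
  | diaMon _ h ih => exact exists_finite_map (diaMon · h) ih
  | interDiaBox α _ ih => exact exists_finite_map (interDiaBox α) ih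

theorem bigOr_intro (hψ : ψ ∈ l) (h : ND Γ ψ) : ND Γ (bigOr l) := by
  induction l with
  | nil => simp at hψ
  | cons φ l ih =>
    rcases l with _ | ⟨φ', l⟩
    · rwa [List.mem_singleton.1 hψ] at h
    · rcases List.mem_cons.1 hψ with rfl | hψ
      exacts [orI1 h, orI2 (ih hψ)]

theorem bigOr_elim (h : ND Γ (bigOr l)) (hl : ∀ ψ ∈ l, ND (insert ψ Γ) χ) : ND Γ χ := by
  induction l generalizing Γ with
  | nil => exact exfalso h
  | cons φ l ih =>
    rcases l with _ | ⟨φ', l⟩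
    · exact cut h (hl φ List.mem_cons_self)
    · refine orE h (hl φ List.mem_cons_self) (ih (hyp (Set.mem_insert _ _)) fun ψ hψ => ?_)
      exact weaken (hl ψ (List.mem_cons_of_mem φ hψ))
        (Set.insert_subset_insert (Set.subset_insert _ _))

theorem bigOr_of_subset {l' : List MDVForm} (hl : l ⊆ l') (h : ND Γ (bigOr l)) :
    ND Γ (bigOr l') :=
  bigOr_elim h fun _ hψ => bigOr_intro (hl hψ) (hyp (Set.mem_insert _ _))

theorem bigOr_map_of_distrib {F : MDVForm → MDVForm}
    (hF : ∀ {Γ φ ψ}, ND Γ (F (φ.or ψ)) → ND Γ ((F φ).or (F ψ))) (hl : l ≠ [])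
    (h : ND Γ (F (bigOr l))) : ND Γ (bigOr (l.map F)) := by
  induction l generalizing Γ with
  | nil => exact absurd rfl hl
  | cons φ l ih =>
    rcases l with _ | ⟨φ', l⟩
    · exact h
    · refine orE (hF h) (orI1 (hyp (Set.mem_insert _ _))) ?_
      exact orI2 (ih (List.cons_ne_nil φ' l) (hyp (Set.mem_insert _ _)))

theorem weaken_singleton (h : ND {φ} ψ) : ND (insert φ Γ) ψ :=
  weaken h (Set.singleton_subset_iff.2 (Set.mem_insert φ Γ))

theorem and_mono (h₁ : ND {φ} φ') (h₂ : ND {ψ} ψ') : ND {φ.and ψ} (φ'.and ψ') :=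
  andI (comp (andE1 (hyp rfl)) h₁) (comp (andE2 (hyp rfl)) h₂)

theorem tensor_mono (h₁ : ND {φ} φ') (h₂ : ND {ψ} ψ') : ND {φ.tensor ψ} (φ'.tensor ψ') :=
  tensorComm (tensorSub (tensorComm (tensorSub (hyp rfl) (weaken_singleton h₂)))
    (weaken_singleton h₁))

theorem or_mono (h₁ : ND {φ} φ') (h₂ : ND {ψ} ψ') : ND {φ.or ψ} (φ'.or ψ') :=
  orE (hyp rfl) (orI1 (weaken_singleton h₁)) (orI2 (weaken_singleton h₂))

theorem box_mono (h : ND {φ} ψ) : ND {φ.box} ψ.box :=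
  boxMon [φ] (List.forall_mem_singleton.2 (hyp rfl)) (by simpa using h)

theorem dia_mono (h : ND {φ} ψ) : ND {φ.dia} ψ.dia :=
  diaMon (hyp rfl) h

theorem distrOrTensor (h : ND Γ ((φ.or ψ).tensor χ)) :
    ND Γ ((φ.tensor χ).or (ψ.tensor χ)) :=
  orE (distrTensorOr (tensorComm h)) (orI1 (tensorComm (hyp (Set.mem_insert _ _))))
    (orI2 (tensorComm (hyp (Set.mem_insert _ _))))

theorem dia_of_cneg_box_neg (h : ND Γ (.cneg (.box (.neg α)))) : ND Γ (.dia α.toMDV) :=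
  diaMon (interBoxDia (.neg α) h) (dne α (hyp rfl))

theorem cneg_box_neg_of_dia (h : ND Γ (.dia α.toMDV)) : ND Γ (.cneg (.box (.neg α))) :=
  interDiaBox (.neg α) (diaMon h (negI (.neg α) (negE α (hyp (Set.mem_insert_of_mem _ rfl))
    (hyp (Set.mem_insert _ _)))))

end ND

section MaximalUnprovable

variable {Δ : Set MDVForm} {φ ψ χ : MDVForm}

theorem exists_maximal_not_nd {Γ : Set MDVForm} (h : ¬ ND Γ φ) :
    ∃ Δ, Γ ⊆ Δ ∧ Maximal (¬ ND · φ) Δ := by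
  refine zorn_subset_nonempty {Δ | ¬ ND Δ φ} (fun c hc hchain hne => ?_) Γ h
  refine ⟨⋃₀ c, fun hd => ?_, fun _ => Set.subset_sUnion_of_mem⟩
  obtain ⟨Δ, hΔ, hfin, hd⟩ := ND.exists_finite_subset hd
  obtain ⟨t, ht, hΔt⟩ :=
    hchain.directedOn.exists_mem_subset_of_finite_of_subset_sUnion hne hfin hΔ
  exact hc ht (hd.weaken hΔt)

theorem Maximal.mem_of_nd (hΔ : Maximal (¬ ND · φ) Δ) (h : ND Δ ψ) : ψ ∈ Δ :=
  hΔ.mem_of_prop_insert fun hψ => hΔ.prop (ND.cut h hψ)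

theorem Maximal.nd_insert_of_notMem (hΔ : Maximal (¬ ND · φ) Δ) (hψ : ψ ∉ Δ) :
    ND (insert ψ Δ) φ :=
  not_not.1 fun h => hψ (hΔ.mem_of_prop_insert h)

theorem Maximal.exists_mem_of_nd_bigOr (hΔ : Maximal (¬ ND · φ) Δ) {l : List MDVForm}
    (h : ND Δ (bigOr l)) : ∃ ψ ∈ l, ψ ∈ Δ := by
  by_contra! hl
  exact hΔ.prop (ND.bigOr_elim h fun ψ hψ => hΔ.nd_insert_of_notMem (hl ψ hψ))

theorem Maximal.cneg_mem_iff (hΔ : Maximal (¬ ND · .bot) Δ) {α : CForm} :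
    .cneg α ∈ Δ ↔ α.toMDV ∉ Δ :=
  ⟨fun hn hα => hΔ.prop (ND.negE α (ND.hyp hα) (ND.hyp hn)),
    fun hα => hΔ.mem_of_nd (ND.negI α (hΔ.nd_insert_of_notMem hα))⟩

theorem Maximal.box_mem_of_nd (hΔ : Maximal (¬ ND · φ) Δ)
    (h : ND {χ | .box χ ∈ Δ} ψ) : .box ψ ∈ Δ := by
  obtain ⟨Δ₀, hΔ₀, hfin, hd⟩ := ND.exists_finite_subset h
  refine hΔ.mem_of_nd (ND.boxMon hfin.toFinset.toList (fun χ hχ => ND.hyp ?_) ?_)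
  · exact hΔ₀ (by simpa using hχ)
  · simpa using hd

end MaximalUnprovable

/-! ## The canonical model -/

theorem not_nd_empty_bot : ¬ ND ∅ .bot := fun h =>
  Set.univ_nonempty.ne_empty
    (h.sound ⟨Unit, ⟨()⟩, fun _ _ => False, fun _ => ∅⟩ Set.univ (by simp))

def canonicalModel : KModel where
  W := {Δ : Set MDVForm // Maximal (¬ ND · .bot) Δ}
  ne := let ⟨Δ, _, hΔ⟩ := exists_maximal_not_nd not_nd_empty_bot; ⟨⟨Δ, hΔ⟩⟩
  R Δ Δ' := ∀ φ, .box φ ∈ Δ.1 → φ ∈ Δ'.1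
  V p := {Δ | .var p ∈ Δ.1}

namespace canonicalModel

theorem exists_R_mem {Δ : canonicalModel.W} {ψ : MDVForm}
    (h : ¬ ND (insert ψ {χ | .box χ ∈ Δ.1}) .bot) :
    ∃ Δ', canonicalModel.R Δ Δ' ∧ ψ ∈ Δ'.1 :=
  let ⟨Δ', hsub, hΔ'⟩ := exists_maximal_not_nd h
  ⟨⟨Δ', hΔ'⟩, fun _ hχ => hsub (Set.mem_insert_of_mem _ hχ), hsub (Set.mem_insert _ _)⟩

theorem holds_iff {Δ : canonicalModel.W} {α : CForm} :
    canonicalModel.holds Δ α ↔ α.toMDV ∈ Δ.1 := by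
  induction α generalizing Δ with
  | var p => rfl
  | bot => exact iff_of_false id fun h => Δ.2.prop (ND.hyp h)
  | neg α ih => exact ih.not.trans Δ.2.cneg_mem_iff.symm
  | and α β ihα ihβ =>
    rw [KModel.holds, ihα, ihβ]
    exact ⟨fun ⟨hα, hβ⟩ => Δ.2.mem_of_nd (ND.andI (ND.hyp hα) (ND.hyp hβ)),
      fun h => ⟨Δ.2.mem_of_nd (ND.andE1 (ND.hyp h)), Δ.2.mem_of_nd (ND.andE2 (ND.hyp h))⟩⟩
  | tensor α β ihα ihβ =>
    rw [KModel.holds, ihα, ihβ]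
    refine ⟨fun h => Δ.2.mem_of_nd ?_, fun h => ?_⟩
    · rcases h with h | h
      exacts [ND.tensorI _ (ND.hyp h), ND.tensorComm (ND.tensorI _ (ND.hyp h))]
    · by_contra! hαβ
      refine Δ.2.prop (ND.tensorE .bot (ND.hyp h) ?_ ?_)
      · exact ND.negE α (ND.hyp (Set.mem_insert _ _))
          (ND.hyp (Set.mem_insert_of_mem _ (Δ.2.cneg_mem_iff.2 hαβ.1)))
      · exact ND.negE β (ND.hyp (Set.mem_insert _ _))
          (ND.hyp (Set.mem_insert_of_mem _ (Δ.2.cneg_mem_iff.2 hαβ.2)))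
  | box α ih =>
    refine ⟨fun h => ?_, fun h Δ' hR => (ih (Δ := Δ')).2 (hR _ h)⟩
    by_contra hbox
    obtain ⟨Δ', hR, hα⟩ := exists_R_mem (Δ := Δ) (ψ := .cneg α) fun hd =>
      hbox (Δ.2.box_mem_of_nd (ND.dne α (ND.negI (.neg α) hd)))
    exact Δ'.2.cneg_mem_iff.1 hα (ih.1 (h Δ' hR))
  | dia α ih =>
    have hbox : (CForm.box (.neg α)).toMDV ∉ Δ.1 ↔ .dia α.toMDV ∈ Δ.1 :=
      ⟨fun h => Δ.2.mem_of_nd (ND.dia_of_cneg_box_neg (ND.hyp (Δ.2.cneg_mem_iff.2 h))),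
        fun h => Δ.2.cneg_mem_iff.1 (Δ.2.mem_of_nd (ND.cneg_box_neg_of_dia (ND.hyp h)))⟩
    refine ⟨fun ⟨Δ', hR, hα⟩ => hbox.1 fun h => ?_, fun h => ?_⟩
    · exact Δ'.2.cneg_mem_iff.1 (hR _ h) (ih.1 hα)
    · obtain ⟨Δ', hR, hα⟩ := exists_R_mem (Δ := Δ) (ψ := α.toMDV) fun hd =>
        hbox.2 h (Δ.2.box_mem_of_nd (ND.negI α hd))
      exact ⟨Δ', hR, ih.2 hα⟩

end canonicalModel

/-! ## Resolutions -/

def elimDep : MDVForm → MDVForm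
  | .var p => .var p
  | .bot => .bot
  | .cneg α => .cneg α
  | .dep αs β => depTensor αs β
  | .and φ ψ => .and (elimDep φ) (elimDep ψ)
  | .tensor φ ψ => .tensor (elimDep φ) (elimDep ψ)
  | .or φ ψ => .or (elimDep φ) (elimDep ψ)
  | .box φ => .box (elimDep φ)
  | .dia φ => .dia (elimDep φ)

theorem ND.to_elimDep (φ : MDVForm) : ND {φ} (elimDep φ) := by
  induction φ with
  | var | bot | cneg => exact ND.hyp rfl
  | dep αs β => exact ND.depE αs β (ND.hyp rfl)
  | and _ _ ih₁ ih₂ => exact ND.and_mono ih₁ ih₂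
  | tensor _ _ ih₁ ih₂ => exact ND.tensor_mono ih₁ ih₂
  | or _ _ ih₁ ih₂ => exact ND.or_mono ih₁ ih₂
  | box _ ih => exact ND.box_mono ih
  | dia _ ih => exact ND.dia_mono ih

theorem ND.of_elimDep (φ : MDVForm) : ND {elimDep φ} φ := by
  induction φ with
  | var | bot | cneg => exact ND.hyp rfl
  | dep αs β => exact ND.depI αs β (ND.hyp rfl)
  | and _ _ ih₁ ih₂ => exact ND.and_mono ih₁ ih₂
  | tensor _ _ ih₁ ih₂ => exact ND.tensor_mono ih₁ ih₂
  | or _ _ ih₁ ih₂ => exact ND.or_mono ih₁ ih₂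
  | box _ ih => exact ND.box_mono ih
  | dia _ ih => exact ND.dia_mono ih

inductive DepFree : MDVForm → Prop
  | var (p : ℕ) : DepFree (.var p)
  | bot : DepFree .bot
  | cneg (α : CForm) : DepFree (.cneg α)
  | and {φ ψ : MDVForm} : DepFree φ → DepFree ψ → DepFree (.and φ ψ)
  | tensor {φ ψ : MDVForm} : DepFree φ → DepFree ψ → DepFree (.tensor φ ψ)
  | or {φ ψ : MDVForm} : DepFree φ → DepFree ψ → DepFree (.or φ ψ)
  | box {φ : MDVForm} : DepFree φ → DepFree (.box φ)
  | dia {φ : MDVForm} : DepFree φ → DepFree (.dia φ)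

namespace DepFree

theorem toMDV (α : CForm) : DepFree α.toMDV := by
  induction α with
  | var p => exact var p
  | bot => exact bot
  | neg α => exact cneg α
  | and _ _ ih₁ ih₂ => exact and ih₁ ih₂
  | tensor _ _ ih₁ ih₂ => exact tensor ih₁ ih₂
  | box _ ih => exact box ih
  | dia _ ih => exact dia ih

theorem signed (b : Bool) (α : CForm) : DepFree (signed b α) := by
  cases b
  exacts [cneg α, toMDV α]

theorem bigAnd {l : List MDVForm} (h : ∀ φ ∈ l, DepFree φ) : DepFree (bigAnd l) := by
  induction l with
  | nil => exact bot
  | cons φ l ih =>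
    rcases l with _ | ⟨ψ, l⟩
    · exact h φ List.mem_cons_self
    · exact and (h φ List.mem_cons_self) (ih fun χ hχ => h χ (List.mem_cons_of_mem φ hχ))

theorem bigTensor {l : List MDVForm} (h : ∀ φ ∈ l, DepFree φ) : DepFree (bigTensor l) := by
  induction l with
  | nil => exact bot
  | cons φ l ih =>
    rcases l with _ | ⟨ψ, l⟩
    · exact h φ List.mem_cons_self
    · exact tensor (h φ List.mem_cons_self) (ih fun χ hχ => h χ (List.mem_cons_of_mem φ hχ))

theorem depTensor (αs : List CForm) (β : CForm) : DepFree (depTensor αs β) := by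
  refine bigTensor fun φ hφ => ?_
  obtain ⟨v, -, rfl⟩ := List.mem_map.1 hφ
  refine bigAnd fun ψ hψ => ?_
  rcases List.mem_append.1 hψ with hψ | hψ
  · rw [← List.map_uncurry_zip_eq_zipWith] at hψ
    obtain ⟨⟨b, α⟩, -, rfl⟩ := List.mem_map.1 hψ
    exact signed b α
  · rw [List.mem_singleton.1 hψ]
    exact or (toMDV β) (cneg β)

theorem elimDep (φ : MDVForm) : DepFree (elimDep φ) := by
  induction φ with
  | var p => exact var p
  | bot => exact bot
  | cneg α => exact cneg α
  | dep αs β => exact depTensor αs β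
  | and _ _ ih₁ ih₂ => exact and ih₁ ih₂
  | tensor _ _ ih₁ ih₂ => exact tensor ih₁ ih₂
  | or _ _ ih₁ ih₂ => exact or ih₁ ih₂
  | box _ ih => exact box ih
  | dia _ ih => exact dia ih

end DepFree

/-- The resolutions of a formula: one classical formula for each way of choosing a disjunct of
every `∨`. A dependence-free formula is equivalent to the `∨`-disjunction of its resolutions. -/
def res : MDVForm → List CForm
  | .var p => [.var p]
  | .bot => [.bot]
  | .cneg α => [.neg α]
  | .dep _ _ => []
  | .and φ ψ => (res φ).flatMap fun a => (res ψ).map (CForm.and a)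
  | .tensor φ ψ => (res φ).flatMap fun a => (res ψ).map (CForm.tensor a)
  | .or φ ψ => res φ ++ res ψ
  | .box φ => (res φ).map .box
  | .dia φ => (res φ).map .dia

theorem res_ne_nil {φ : MDVForm} (h : DepFree φ) : res φ ≠ [] := by
  induction h with
  | and _ _ ih₁ ih₂ | tensor _ _ ih₁ ih₂ =>
    simpa [res, List.flatMap_eq_nil_iff, List.eq_nil_iff_forall_not_mem] using
      ⟨List.exists_mem_of_ne_nil _ ih₁, List.exists_mem_of_ne_nil _ ih₂⟩
  | _ => simp_all [res]

namespace ND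

theorem of_mem_res {φ : MDVForm} {α : CForm} (hα : α ∈ res φ) : ND {α.toMDV} φ := by
  induction φ generalizing α with
  | var | bot | cneg => rw [List.mem_singleton.1 hα]; exact hyp rfl
  | dep => simp [res] at hα
  | and _ _ ih₁ ih₂ =>
    simp only [res, List.mem_flatMap, List.mem_map] at hα
    obtain ⟨a, ha, b, hb, rfl⟩ := hα
    exact and_mono (ih₁ ha) (ih₂ hb)
  | tensor _ _ ih₁ ih₂ =>
    simp only [res, List.mem_flatMap, List.mem_map] at hα
    obtain ⟨a, ha, b, hb, rfl⟩ := hα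
    exact tensor_mono (ih₁ ha) (ih₂ hb)
  | or _ _ ih₁ ih₂ =>
    rcases List.mem_append.1 hα with hα | hα
    exacts [orI1 (ih₁ hα), orI2 (ih₂ hα)]
  | box _ ih =>
    obtain ⟨a, ha, rfl⟩ := List.mem_map.1 hα
    exact box_mono (ih ha)
  | dia _ ih =>
    obtain ⟨a, ha, rfl⟩ := List.mem_map.1 hα
    exact dia_mono (ih ha)

theorem bigOr_res {φ : MDVForm} (h : DepFree φ) : ND {φ} (bigOr ((res φ).map CForm.toMDV)) := by
  have hne {φ} (h : DepFree φ) : (res φ).map CForm.toMDV ≠ [] := by simpa using res_ne_nil h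
  induction h with
  | var | bot | cneg => exact hyp rfl
  | and _ _ ih₁ ih₂ =>
    refine bigOr_elim (comp (andE1 (hyp rfl)) ih₁) fun _ hx => ?_
    obtain ⟨a, ha, rfl⟩ := List.mem_map.1 hx
    refine bigOr_elim (comp (andE2 (hyp (Set.mem_insert_of_mem _ rfl))) ih₂) fun _ hy => ?_
    obtain ⟨b, hb, rfl⟩ := List.mem_map.1 hy
    exact bigOr_intro (List.mem_map_of_mem (List.mem_flatMap.2 ⟨a, ha, List.mem_map_of_mem hb⟩))
      (andI (hyp (Set.mem_insert_of_mem _ (Set.mem_insert _ _))) (hyp (Set.mem_insert _ _)))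
  | tensor h₁ h₂ ih₁ ih₂ =>
    refine comp (tensor_mono ih₁ ih₂)
      (bigOr_elim (bigOr_map_of_distrib (F := (·.tensor _)) distrOrTensor (hne h₁) (hyp rfl))
        fun _ hx => ?_)
    rw [List.map_map] at hx
    obtain ⟨a, ha, rfl⟩ := List.mem_map.1 hx
    refine bigOr_elim (bigOr_map_of_distrib distrTensorOr (hne h₂) (hyp (Set.mem_insert _ _)))
      fun _ hy => ?_
    rw [List.map_map] at hy
    obtain ⟨b, hb, rfl⟩ := List.mem_map.1 hy
    exact bigOr_intro (List.mem_map_of_mem (List.mem_flatMap.2 ⟨a, ha, List.mem_map_of_mem hb⟩))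
      (hyp (Set.mem_insert _ _))
  | or _ _ ih₁ ih₂ =>
    refine orE (hyp rfl) (bigOr_of_subset ?_ (weaken_singleton ih₁))
      (bigOr_of_subset ?_ (weaken_singleton ih₂))
    · exact List.map_subset _ (List.subset_append_left _ _)
    · exact List.map_subset _ (List.subset_append_right _ _)
  | box h ih =>
    have := comp (box_mono ih) (bigOr_map_of_distrib distrBoxOr (hne h) (hyp rfl))
    rw [List.map_map] at this
    rwa [res, List.map_map]
  | dia h ih =>
    have := comp (dia_mono ih) (bigOr_map_of_distrib distrDiaOr (hne h) (hyp rfl))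
    rw [List.map_map] at this
    rwa [res, List.map_map]

end ND

theorem ND.bigOr_res_elimDep (φ : MDVForm) : ND {φ} (bigOr ((res (elimDep φ)).map CForm.toMDV)) :=
  ND.comp (ND.to_elimDep φ) (ND.bigOr_res (DepFree.elimDep φ))

theorem ND.of_mem_res_elimDep {φ : MDVForm} {α : CForm} (hα : α ∈ res (elimDep φ)) :
    ND {α.toMDV} φ :=
  ND.comp (ND.of_mem_res hα) (ND.of_elimDep φ)

theorem KModel.exists_mem_res_elimDep_sat {M : KModel} {X : Set M.W} {φ : MDVForm}
    (h : M.sat X φ) : ∃ α ∈ res (elimDep φ), M.sat X α.toMDV := by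
  have hor := (ND.bigOr_res_elimDep φ).sound M X (by simpa using h)
  simpa using (KModel.sat_bigOr (by simpa using res_ne_nil (DepFree.elimDep φ))).1 hor

theorem Maximal.exists_mem_res_elimDep {Δ : Set MDVForm} {φ ψ : MDVForm}
    (hΔ : Maximal (¬ ND · ψ) Δ) (h : φ ∈ Δ) : ∃ α ∈ res (elimDep φ), α.toMDV ∈ Δ := by
  simpa using hΔ.exists_mem_of_nd_bigOr (ND.comp (ND.hyp h) (ND.bigOr_res_elimDep φ))

/-! ## Completeness -/

namespace canonicalModel

theorem exists_cneg_mem {Δ : Set MDVForm} {α : CForm} (h : ¬ ND Δ α.toMDV) :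
    ∃ Θ : canonicalModel.W, Δ ⊆ Θ.1 ∧ .cneg α ∈ Θ.1 := by
  obtain ⟨Θ, hsub, hΘ⟩ := exists_maximal_not_nd (Γ := insert (.cneg α) Δ) fun hd =>
    h (ND.dne α (ND.negI (.neg α) hd))
  exact ⟨⟨Θ, hΘ⟩, (Set.subset_insert _ _).trans hsub, hsub (Set.mem_insert _ _)⟩

theorem sat_of_mem {Δ : Set MDVForm} {ψ : MDVForm} (hΔ : Maximal (¬ ND · ψ) Δ)
    {X : Set canonicalModel.W} (hX : ∀ Θ ∈ X, Δ ⊆ Θ.1) {φ : MDVForm} (hφ : φ ∈ Δ) :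
    canonicalModel.sat X φ := by
  obtain ⟨α, hα, hαΔ⟩ := hΔ.exists_mem_res_elimDep hφ
  refine (ND.of_mem_res_elimDep hα).sound _ X ?_
  simpa [KModel.sat_toMDV_iff, holds_iff] using fun Θ hΘ => hX Θ hΘ hαΔ

end canonicalModel

open canonicalModel in
theorem ND.complete {Γ : Set MDVForm} {φ : MDVForm} (h : SetEntails Γ φ) : ND Γ φ := by
  by_contra hnd
  obtain ⟨Δ, hΓΔ, hΔ⟩ := exists_maximal_not_nd hnd
  have hres {β} (hβ : β ∈ res (elimDep φ)) : ¬ ND Δ β.toMDV := fun hd =>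
    hΔ.prop (hd.comp (ND.of_mem_res_elimDep hβ))
  -- the counter-team: one world for each resolution `β` of `φ`, extending `Δ` and refuting `β`
  choose w hwΔ hwβ using fun β hβ => exists_cneg_mem (hres (β := β) hβ)
  let X : Set canonicalModel.W := Set.range fun β : {β // β ∈ res (elimDep φ)} => w β.1 β.2
  have hX : ∀ Θ ∈ X, Δ ⊆ Θ.1 := by
    rintro _ ⟨β, rfl⟩
    exact hwΔ β.1 β.2
  obtain ⟨β, hβ, hXβ⟩ := KModel.exists_mem_res_elimDep_sat
    (h _ X fun γ hγ => sat_of_mem hΔ hX (hΓΔ hγ))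
  have hβw : β.toMDV ∈ (w β hβ).1 :=
    holds_iff.1 (KModel.sat_toMDV_iff.1 hXβ _ ⟨⟨β, hβ⟩, rfl⟩)
  exact (w β hβ).2.cneg_mem_iff.1 (hwβ β hβ) hβw

/-- STATEMENT 12: Strong Completeness (and soundness) of the natural deduction
system of MD∨: Γ⊨φ iff Γ⊢φ. -/
theorem mdv_strong_completeness (Γ : Set MDVForm) (φ : MDVForm) :
    SetEntails Γ φ ↔ ND Γ φ :=
  ⟨ND.complete, ND.sound⟩
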